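/- Let Γ be a colored tree and let MC(Γ) denote the set of minimally complete subsets of E(Γ). Then the subgroup of ℤ^{MC(Γ)} consisting of all functions of the form Y ↦ ⟨u, v_Y⟩ with u ∈ M equals the subgroup generated by the g functions χ_v, where v ranges over the uncolored vertices of Γ and χ_v(Y) = 1 if Y contains an edge of the subtree rooted at v and χ_v(Y) = 0 otherwise. -/

import Mathlib

/-!
Unwinding the recursion, `v_Y(p) = χ_p(Y) - ∑ χ_q(Y)` over the uncolored children `q` of `p`:
below an edge of `Y` everything vanishes, and at the root the principal branches outside `Y` are
exactly the edges to uncolored children whose subtree meets `Y`. This transformation of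
`(χ_p(Y))_p` is unitriangular for the tree order; explicitly, pairing with `s_v = ∑ e_u^*` over the
uncolored descendants `u` of `v` telescopes to `⟨s_v, v_Y⟩ = χ_v(Y)`. So the functions
`Y ↦ ⟨u, v_Y⟩` are integer combinations of the `χ_p`, and conversely every `χ_v` is one of them.
-/

noncomputable section
open Classical

/-- A rose tree whose leaves ("colored vertices") carry labels of type `α` and whose
internal vertices ("uncolored vertices") are unlabelled. -/
inductive CTree (α : Type) : Type
  | leaf (a : α) : CTree α
  | node (ts : List (CTree α)) : CTree α

namespace CTree

variable {α : Type}

/-- The subtree of `t` at a position `p` (a list of child indices), if it exists. -/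
def sub : CTree α → List ℕ → Option (CTree α)
  | t, [] => some t
  | leaf _, _ :: _ => none
  | node ts, i :: p =>
      match ts[i]? with
      | some c => sub c p
      | none => none

/-- All lists of natural numbers of length at most `k` with entries `< m`. -/
def allLists (m : ℕ) : ℕ → List (List ℕ)
  | 0 => [[]]
  | k + 1 => [] :: (List.range m).flatMap (fun i => (allLists m k).map (i :: ·))

/-- The finite set of positions of vertices of `t`. -/
def vertS (t : CTree α) : Finset (List ℕ) :=
  (allLists (sizeOf t) (sizeOf t)).toFinset.filter (fun p => (t.sub p).isSome)

/-- The finite set of positions of uncolored (internal) vertices of `t`. -/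
def uncS (t : CTree α) : Finset (List ℕ) :=
  (allLists (sizeOf t) (sizeOf t)).toFinset.filter (fun p => ∃ ts, t.sub p = some (node ts))

/-- The finite set of positions of colored vertices (leaves) of `t`. -/
def colS (t : CTree α) : Finset (List ℕ) :=
  (allLists (sizeOf t) (sizeOf t)).toFinset.filter (fun p => ∃ a, t.sub p = some (leaf a))

/-- Edges of `t` are identified with the positions of non-root vertices (an edge joins
the vertex at `p ≠ []` to its parent at `p.dropLast`). -/
def edgeS (t : CTree α) : Finset (List ℕ) := (vertS t).erase []

/-- `t` is a colored tree: every internal vertex has at least one child (so the leaves,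
i.e. the childless vertices, are exactly the colored vertices) and the root is
uncolored. -/
def IsColoredTree (t : CTree α) : Prop :=
  (∀ p, t.sub p ≠ some (node ([] : List (CTree α)))) ∧ ∃ ts, t = node ts

/-- The weight `w_d ∈ M` of an edge `d`: the sum of the dual basis vectors `e_u^*`
over uncolored vertices `u` that are descendants of the upper endpoint of `d` but not
descendants of the lower endpoint of `d`. -/
def wt (t : CTree α) (d : List ℕ) : List ℕ → ℤ := fun u =>
  if u ∈ uncS t ∧ d.dropLast <+: u ∧ ¬ d <+: u then 1 else 0

/-- `s_v ∈ M` : the sum of `e_u^*` over the uncolored descendants `u` of `v`;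
`s(Γ) = sv t []`. -/
def sv (t : CTree α) (v : List ℕ) : List ℕ → ℤ := fun u =>
  if u ∈ uncS t ∧ v <+: u then 1 else 0

/-- The pairing between `M = Hom(ℤ^g, ℤ)` and `ℤ^g` (both realized as integer-valued
functions on the uncolored vertices of `t`). -/
def pairZ (t : CTree α) (μ x : List ℕ → ℤ) : ℤ := ∑ p ∈ uncS t, μ p * x p

/-- The pairing between `M` and `ℝ^g`. -/
def pairR (t : CTree α) (μ : List ℕ → ℤ) (x : List ℕ → ℝ) : ℝ :=
  ∑ p ∈ uncS t, (μ p : ℝ) * x p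

/-- The multiset of edges of the (downward) path from the vertex `v` to the vertex `c`;
each edge occurs with multiplicity one. -/
def pathEdges (t : CTree α) (v c : List ℕ) : Multiset (List ℕ) :=
  ((edgeS t).filter (fun d => v <+: d ∧ d ≠ v ∧ d <+: c)).val

/-- The relation `A ∼ B` on multisets of edges: `A` and `B` consist exactly of the edges
of two non-self-crossing paths from a common vertex to two colored vertices. -/
def Sim (t : CTree α) (A B : Multiset (List ℕ)) : Prop :=
  ∃ v ∈ vertS t, ∃ c₁ ∈ colS t, ∃ c₂ ∈ colS t, v <+: c₁ ∧ v <+: c₂ ∧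
    A = pathEdges t v c₁ ∧ B = pathEdges t v c₂

/-- `Y` is a minimally complete subset of the set of edges of `t`: every
(non-self-crossing) path from the root to a colored vertex contains exactly one edge
of `Y`. -/
def MinComplete (t : CTree α) (Y : Finset (List ℕ)) : Prop :=
  Y ⊆ edgeS t ∧ ∀ c ∈ colS t, ∃! d, d ∈ Y ∧ d <+: c

/-- The finite set of minimally complete subsets of the edge set of `t`. -/
def MCfin (t : CTree α) : Finset (Finset (List ℕ)) :=
  (edgeS t).powerset.filter (fun Y => MinComplete t Y)

/-- The dual cone `C(Γ) = {x ∈ ℝ^g | ⟨w_d, x⟩ ≥ 0 for all edges d}`. -/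
def dualCone (t : CTree α) : Set (List ℕ → ℝ) :=
  {x | (∀ p, p ∉ uncS t → x p = 0) ∧ ∀ d ∈ edgeS t, 0 ≤ pairR t (wt t d) x}

/-- The ray spanned by a vector `v`. -/
def ray (v : List ℕ → ℝ) : Set (List ℕ → ℝ) := {x | ∃ c : ℝ, 0 ≤ c ∧ x = c • v}

/-- `F` is a one-dimensional face (extreme ray) of the convex cone `C`. -/
def IsOneDimFace (C F : Set (List ℕ → ℝ)) : Prop :=
  F ⊆ C ∧ (∃ v, v ≠ 0 ∧ F = ray v) ∧
    ∀ x ∈ C, ∀ y ∈ C, x + y ∈ F → x ∈ F ∧ y ∈ F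

/-- The convex cone generated by a set `G ⊆ ℤ^g` inside `ℝ^g`: all finite nonnegative
real combinations of elements of `G`. -/
def coneHull (G : Set (List ℕ → ℤ)) : Set (List ℕ → ℝ) :=
  {x | ∃ (F : Finset (List ℕ → ℤ)) (c : (List ℕ → ℤ) → ℝ),
    ↑F ⊆ G ∧ (∀ v ∈ F, 0 ≤ c v) ∧
    x = ∑ v ∈ F, c v • (fun p => ((v p : ℤ) : ℝ))}

/-- `e_{v_0} ∈ ℤ^g`: the basis vector of the root vertex. -/
def e0 : List ℕ → ℤ := fun p => if p = [] then 1 else 0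

/-- The inclusion `ℤ^{g_i} → ℤ^g` corresponding to the `i`-th principal subtree. -/
def shift (i : ℕ) (f : List ℕ → ℤ) : List ℕ → ℤ := fun p =>
  match p with
  | [] => 0
  | j :: q => if j = i then f q else 0

def isNodeB : CTree α → Bool
  | leaf _ => false
  | node _ => true

/-- The recursively defined set `G(Γ) ⊆ ℤ^g`: `G(Γ)` consists of all vectors
`e_{v₀} + ∑_{i ∈ J} (w_i - e_{v₀})` where `J` ranges over subsets of the set of indices
of non-trivial principal subtrees and `w_i ∈ G(Γ_i)` (in particular if `g = 1` this is
just `{e_{v₀}}`). -/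
def Gset : CTree α → Set (List ℕ → ℤ)
  | leaf _ => ∅
  | node ts =>
      {v | ∃ (J : Finset (Fin ts.length)) (w : Fin ts.length → (List ℕ → ℤ)),
        (∀ i ∈ J, (ts.get i).isNodeB = true ∧ w i ∈ Gset (ts.get i)) ∧
        v = e0 + ∑ i ∈ J, (shift i.1 (w i) - e0)}
  termination_by t => sizeOf t
  decreasing_by
    have h1 : ts.get i ∈ ts := List.get_mem ts i
    have h2 := List.sizeOf_lt_of_mem h1
    simp only [CTree.node.sizeOf_spec]
    omega

/-- Transport of a set of edges of `Γ` to the `i`-th principal subtree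
(`Y ∩ E(Γ_i)`, rewritten in the coordinates of `Γ_i`). -/
def sect (i : ℕ) (Y : Finset (List ℕ)) : Finset (List ℕ) :=
  (Y.filter (fun p => p.head? = some i)).image List.tail

/-- The recursively defined vector `v_Y ∈ ℤ^g` attached to a (minimally complete) set
of edges `Y`: `v_Y = e_{v₀} + ∑_{i ∈ I} (v_{Y_i} - e_{v₀})` where
`I = {i | d_i ∉ Y}` and `Y_i = Y ∩ E(Γ_i)` (if `g = 1` this is just `e_{v₀}`). -/
def vY : CTree α → Finset (List ℕ) → (List ℕ → ℤ)
  | leaf _, _ => 0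
  | node ts, Y =>
      e0 + ∑ i ∈ Finset.univ.filter (fun i : Fin ts.length => [i.1] ∉ Y),
        (shift i.1 (vY (ts.get i) (sect i.1 Y)) - e0)
  termination_by t => sizeOf t
  decreasing_by
    have h1 : ts.get i ∈ ts := List.get_mem ts i
    have h2 := List.sizeOf_lt_of_mem h1
    simp only [CTree.node.sizeOf_spec]
    omega

/-- The set of balanced labellings `X(Γ) ⊆ ℂ^{E(Γ)}`. -/
def Xbal (t : CTree α) : Set (List ℕ → ℂ) :=
  {x | ∀ v ∈ uncS t, ∀ c ∈ colS t, ∀ c' ∈ colS t, v <+: c → v <+: c' →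
    ((pathEdges t v c).map x).prod = ((pathEdges t v c').map x).prod}

/-- `Y ⊆ E(Γ)` is complete: for every finite multiset `A` of edges, the monomial
`∏_{d ∈ A} x_d` vanishes identically on `{x ∈ X(Γ) | x_y = 0 ∀ y ∈ Y}` if and only if
`A` contains at least one edge belonging to `Y`. -/
def CompleteSet (t : CTree α) (Y : Finset (List ℕ)) : Prop :=
  ∀ A : Multiset (List ℕ), (∀ d ∈ A, d ∈ edgeS t) →
    ((∀ x ∈ Xbal t, (∀ y ∈ Y, x y = 0) → (A.map x).prod = 0) ↔ ∃ d ∈ A, d ∈ Y)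

/-- A partition of a type `I`: a finite collection of nonempty pairwise disjoint
subsets covering `I`. -/
def IsPart {I : Type} (P : Finset (Finset I)) : Prop :=
  (∀ S ∈ P, S ≠ ∅) ∧ ∀ a : I, ∃! S, S ∈ P ∧ a ∈ S

/-- The tree with a single uncolored vertex whose children are the colored vertices
labelled by the elements of `S`. -/
def blockTree {I : Type} (S : Finset I) : CTree I := node (S.toList.map leaf)

/-- The colored tree `Γ_P` of a partition `P`: the root has one child for each block
`S ∈ P`, an uncolored vertex whose children are colored vertices labelled by the
elements of `S`. -/
def gammaP {I : Type} (P : Finset (Finset I)) : CTree I := node (P.toList.map blockTree)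

/-- A tree homomorphism `t → t'`, described by a map `f` on vertex positions: it sends
root to root, vertices to vertices, the two endpoints of any edge to the two endpoints
of an edge, and restricts to a label-preserving bijection between the colored
vertices. -/
def TreeHom {I : Type} (t t' : CTree I) (f : List ℕ → List ℕ) : Prop :=
  f [] = [] ∧
  (∀ p ∈ vertS t, f p ∈ vertS t') ∧
  (∀ p ∈ vertS t, p ≠ [] →
    (f p ≠ [] ∧ (f p).dropLast = f p.dropLast) ∨
    (f p.dropLast ≠ [] ∧ (f p.dropLast).dropLast = f p)) ∧
  (∀ p a, t.sub p = some (leaf a) → t'.sub (f p) = some (leaf a)) ∧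
  Set.BijOn f {p | ∃ a, t.sub p = some (leaf a)} {q | ∃ a, t'.sub q = some (leaf a)}

/-- A partition `P` of the label set is compatible with the colored tree `t` if there
exists a tree homomorphism `t → Γ_P`. -/
def Compatible {I : Type} (t : CTree I) (P : Finset (Finset I)) : Prop :=
  ∃ f, TreeHom t (gammaP P) f

/-- `C_y ⊆ I` : the labels of the colored vertices whose path from the root contains
the edge `y`. -/
def Cy {I : Type} [Fintype I] [DecidableEq I] (t : CTree I) (y : List ℕ) : Finset I :=
  Finset.univ.filter (fun a => ∃ p, t.sub p = some (leaf a) ∧ y <+: p)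

theorem induction_mem {motive : CTree α → Prop} (leaf : ∀ a, motive (leaf a))
    (node : ∀ ts, (∀ t ∈ ts, motive t) → motive (node ts)) (t : CTree α) : motive t :=
  match t with
  | .leaf a => leaf a
  | .node ts => node ts fun t _ => induction_mem leaf node t

lemma mem_allLists {m k : ℕ} {p : List ℕ} :
    p ∈ allLists m k ↔ p.length ≤ k ∧ ∀ x ∈ p, x < m := by
  induction k generalizing p with
  | zero => cases p <;> simp [allLists]
  | succ k ih =>
    cases p with
    | nil => simp [allLists]
    | cons i q => simp [allLists, ih, and_comm, and_left_comm]

lemma one_le_sizeOf (t : CTree α) : 1 ≤ sizeOf t := by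
  cases t <;> simp

lemma length_lt_sizeOf (ts : List (CTree α)) : ts.length < sizeOf ts := by
  induction ts with
  | nil => simp
  | cons a l ih =>
    have := one_le_sizeOf a
    simp only [List.length_cons, List.cons.sizeOf_spec]
    omega

lemma sub_isSome_bounds (p : List ℕ) : ∀ t : CTree α, (t.sub p).isSome →
    p.length < sizeOf t ∧ ∀ x ∈ p, x < sizeOf t := by
  induction p with
  | nil => exact fun t _ => ⟨one_le_sizeOf t, by simp⟩
  | cons i q ih =>
    rintro (_ | ts) h
    · simp [sub] at h
    · obtain ⟨hi, hsome⟩ : ∃ hi : i < ts.length, (ts[i].sub q).isSome := by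
        simp only [sub] at h
        split at h
        · rename_i c hc
          obtain ⟨hi, rfl⟩ := List.getElem?_eq_some_iff.mp hc
          exact ⟨hi, h⟩
        · simp at h
      have hsz := List.sizeOf_lt_of_mem (List.getElem_mem hi)
      have hlen := length_lt_sizeOf ts
      obtain ⟨h1, h2⟩ := ih _ hsome
      simp only [node.sizeOf_spec, List.length_cons, List.mem_cons]
      refine ⟨by omega, ?_⟩
      rintro x (rfl | hx)
      · omega
      · have := h2 x hx; omega

lemma mem_allLists_of_isSome {t : CTree α} {p : List ℕ} (h : (t.sub p).isSome) :
    p ∈ allLists (sizeOf t) (sizeOf t) := by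
  obtain ⟨h1, h2⟩ := sub_isSome_bounds p t h
  exact mem_allLists.mpr ⟨h1.le, h2⟩

lemma mem_vertS {t : CTree α} {p : List ℕ} : p ∈ vertS t ↔ (t.sub p).isSome := by
  simpa [vertS] using mem_allLists_of_isSome

lemma mem_uncS {t : CTree α} {p : List ℕ} : p ∈ uncS t ↔ ∃ ts, t.sub p = some (node ts) := by
  simp only [uncS, Finset.mem_filter, List.mem_toFinset, and_iff_right_iff_imp]
  rintro ⟨ts, h⟩
  exact mem_allLists_of_isSome (by simp [h])

lemma mem_colS {t : CTree α} {p : List ℕ} : p ∈ colS t ↔ ∃ a, t.sub p = some (leaf a) := by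
  simp only [colS, Finset.mem_filter, List.mem_toFinset, and_iff_right_iff_imp]
  rintro ⟨a, h⟩
  exact mem_allLists_of_isSome (by simp [h])

lemma mem_edgeS {t : CTree α} {p : List ℕ} : p ∈ edgeS t ↔ p ≠ [] ∧ (t.sub p).isSome := by
  rw [edgeS, Finset.mem_erase, mem_vertS]

lemma sub_append (p q : List ℕ) (t : CTree α) :
    t.sub (p ++ q) = (t.sub p).bind (·.sub q) := by
  induction p generalizing t with
  | nil => simp [sub]
  | cons i p ih =>
    cases t with
    | leaf a => simp [sub]
    | node ts =>
      simp only [List.cons_append, sub]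
      split <;> simp [ih]

lemma sub_cons {ts : List (CTree α)} {j : ℕ} {c : CTree α} (hc : ts[j]? = some c)
    (q : List ℕ) : (node ts).sub (j :: q) = c.sub q := by
  simp only [sub, hc]

lemma exists_getElem?_of_sub_cons {ts : List (CTree α)} {j : ℕ} {q : List ℕ}
    (h : ((node ts).sub (j :: q)).isSome) : ∃ c, ts[j]? = some c ∧ (c.sub q).isSome := by
  simp only [sub] at h
  split at h
  · exact ⟨_, ‹_›, h⟩
  · simp at h

lemma mem_uncS_node_cons {ts : List (CTree α)} {j : ℕ} {c : CTree α}
    (hc : ts[j]? = some c) {p : List ℕ} : j :: p ∈ uncS (node ts) ↔ p ∈ uncS c := by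
  simp only [mem_uncS, sub_cons hc]

lemma mem_colS_node_cons {ts : List (CTree α)} {j : ℕ} {c : CTree α}
    (hc : ts[j]? = some c) {p : List ℕ} : j :: p ∈ colS (node ts) ↔ p ∈ colS c := by
  simp only [mem_colS, sub_cons hc]

lemma dropLast_mem_uncS {t : CTree α} {p : List ℕ} (hp : p ∈ uncS t) (hne : p ≠ []) :
    p.dropLast ∈ uncS t := by
  obtain ⟨ts, hts⟩ := mem_uncS.mp hp
  rw [← List.dropLast_append_getLast hne, sub_append] at hts
  rcases hs : t.sub p.dropLast with _ | (_ | us)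
  · simp [hs] at hts
  · simp [hs, sub] at hts
  · exact mem_uncS.mpr ⟨us, hs⟩

def NoEmptyNode (t : CTree α) : Prop := ∀ p, t.sub p ≠ some (node ([] : List (CTree α)))

lemma NoEmptyNode.sub {t s : CTree α} (ht : NoEmptyNode t) {p : List ℕ}
    (hs : t.sub p = some s) : NoEmptyNode s := fun r h =>
  ht (p ++ r) (by rw [sub_append, hs]; exact h)

lemma NoEmptyNode.exists_mem_colS : ∀ {t : CTree α}, NoEmptyNode t → ∃ c, c ∈ colS t := by
  intro t
  induction t using induction_mem with
  | leaf a => exact fun _ => ⟨[], mem_colS.mpr ⟨a, rfl⟩⟩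
  | node ts ih =>
    intro ht
    obtain ⟨u, us, rfl⟩ : ∃ u us, ts = u :: us :=
      List.exists_cons_of_ne_nil fun h => ht [] (by rw [h]; rfl)
    have hu : (u :: us)[0]? = some u := rfl
    obtain ⟨c, hc⟩ := ih u List.mem_cons_self (ht.sub (sub_cons hu []))
    exact ⟨0 :: c, (mem_colS_node_cons hu).mpr hc⟩

lemma NoEmptyNode.exists_mem_colS_prefix {t s : CTree α} (ht : NoEmptyNode t) {p : List ℕ}
    (hs : t.sub p = some s) : ∃ c ∈ colS t, p <+: c := by
  obtain ⟨c, hc⟩ := (ht.sub hs).exists_mem_colS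
  refine ⟨p ++ c, mem_colS.mpr ?_, List.prefix_append p c⟩
  obtain ⟨a, ha⟩ := mem_colS.mp hc
  exact ⟨a, by rw [sub_append, hs]; exact ha⟩

lemma mem_MCfin {t : CTree α} {Y : Finset (List ℕ)} : Y ∈ MCfin t ↔ MinComplete t Y := by
  simp only [MCfin, Finset.mem_filter, Finset.mem_powerset, and_iff_right_iff_imp]
  exact And.left

namespace MinComplete

variable {t : CTree α} {Y : Finset (List ℕ)}

lemma ne_nil (hY : MinComplete t Y) {d : List ℕ} (hd : d ∈ Y) : d ≠ [] :=
  (mem_edgeS.mp (hY.1 hd)).1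

lemma eq_of_prefix (ht : NoEmptyNode t) (hY : MinComplete t Y) {d e : List ℕ}
    (hd : d ∈ Y) (he : e ∈ Y) (hed : e <+: d) : e = d := by
  obtain ⟨s, hs⟩ := Option.isSome_iff_exists.mp (mem_edgeS.mp (hY.1 hd)).2
  obtain ⟨c, hc, hdc⟩ := ht.exists_mem_colS_prefix hs
  exact (hY.2 c hc).unique ⟨he, hed.trans hdc⟩ ⟨hd, hdc⟩

end MinComplete

/-- The paper's `χ_v(Y)`: the edge `d` lies in the subtree rooted at `v` iff its upper endpoint
`d.dropLast` descends from `v`. -/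
def chi (Y : Finset (List ℕ)) (v : List ℕ) : ℤ :=
  if ∃ d ∈ Y, v <+: d.dropLast then 1 else 0

lemma chi_eq_zero_of_prefix {t : CTree α} {Y : Finset (List ℕ)} (ht : NoEmptyNode t)
    (hY : MinComplete t Y) {e r : List ℕ} (he : e ∈ Y) (her : e <+: r) : chi Y r = 0 := by
  rw [chi, if_neg]
  rintro ⟨d, hd, hrd⟩
  have hed : e <+: d.dropLast := her.trans hrd
  have := hed.length_le
  rw [hY.eq_of_prefix ht hd he (hed.trans (List.dropLast_prefix d)), List.length_dropLast] at this
  have := List.length_pos_iff.mpr (hY.ne_nil hd)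
  omega

/-- Below an uncolored vertex `r` lies a colored vertex, whose path from the root meets `Y`;
if it does not meet `Y` above `r`, it does so strictly below `r`. -/
lemma chi_eq_one {t : CTree α} {Y : Finset (List ℕ)} (ht : NoEmptyNode t)
    (hY : MinComplete t Y) {r : List ℕ} (hr : r ∈ uncS t) (hrY : ∀ e ∈ Y, ¬ e <+: r) :
    chi Y r = 1 := by
  obtain ⟨us, hus⟩ := mem_uncS.mp hr
  obtain ⟨c, hc, hrc⟩ := ht.exists_mem_colS_prefix hus
  obtain ⟨d, ⟨hd, hdc⟩, -⟩ := hY.2 c hc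
  refine if_pos ⟨d, hd, ?_⟩
  by_cases hlen : d.length ≤ r.length
  · exact absurd (List.prefix_of_prefix_length_le hdc hrc hlen) (hrY d hd)
  · exact List.prefix_of_prefix_length_le hrc ((List.dropLast_prefix d).trans hdc)
      (by rw [List.length_dropLast]; omega)

lemma mem_sect {j : ℕ} {Y : Finset (List ℕ)} {d : List ℕ} : d ∈ sect j Y ↔ j :: d ∈ Y := by
  simp only [sect, Finset.mem_image, Finset.mem_filter]
  constructor
  · rintro ⟨_ | ⟨a, l⟩, ⟨hd, hh⟩, rfl⟩
    · simp at hh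
    · obtain rfl : a = j := by simpa using hh
      exact hd
  · exact fun h => ⟨j :: d, ⟨h, rfl⟩, rfl⟩

lemma chi_sect {j : ℕ} {Y : Finset (List ℕ)} (hjY : [j] ∉ Y) (r : List ℕ) :
    chi (sect j Y) r = chi Y (j :: r) := by
  refine if_congr ⟨?_, ?_⟩ rfl rfl
  · rintro ⟨d, hd, hr⟩
    have hd : j :: d ∈ Y := mem_sect.mp hd
    have hne : d ≠ [] := by rintro rfl; exact hjY hd
    refine ⟨j :: d, hd, ?_⟩
    rw [List.dropLast_cons_of_ne_nil hne]
    exact List.cons_prefix_cons.mpr ⟨rfl, hr⟩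
  · rintro ⟨_ | ⟨a, _ | ⟨b, l⟩⟩, hd, h⟩
    · simp at h
    · simp at h
    · rw [List.dropLast_cons_of_ne_nil (List.cons_ne_nil b l)] at h
      obtain ⟨rfl, hr⟩ := List.cons_prefix_cons.mp h
      exact ⟨b :: l, mem_sect.mpr hd, hr⟩

lemma MinComplete.sect {ts : List (CTree α)} {j : ℕ} {c : CTree α} (hc : ts[j]? = some c)
    {Y : Finset (List ℕ)} (hY : MinComplete (node ts) Y) (hjY : [j] ∉ Y) :
    MinComplete c (sect j Y) := by
  refine ⟨fun d hd => ?_, fun c' hc' => ?_⟩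
  · have hE := mem_edgeS.mp (hY.1 (mem_sect.mp hd))
    rw [sub_cons hc] at hE
    refine mem_edgeS.mpr ⟨?_, hE.2⟩
    rintro rfl
    exact hjY (mem_sect.mp hd)
  · obtain ⟨_ | ⟨a, l⟩, ⟨hdY, hdc⟩, huniq⟩ := hY.2 (j :: c') ((mem_colS_node_cons hc).mpr hc')
    · exact absurd rfl (hY.ne_nil hdY)
    · obtain ⟨rfl, hl⟩ := List.cons_prefix_cons.mp hdc
      refine ⟨l, ⟨mem_sect.mpr hdY, hl⟩, fun y ⟨hy, hyc⟩ => ?_⟩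
      exact List.cons_injective
        (huniq (a :: y) ⟨mem_sect.mp hy, List.cons_prefix_cons.mpr ⟨rfl, hyc⟩⟩)

lemma vY_node_nil (ts : List (CTree α)) (Y : Finset (List ℕ)) :
    vY (node ts) Y [] = 1 - ((Finset.univ.filter fun i : Fin ts.length => [i.1] ∉ Y).card : ℤ) := by
  rw [vY]
  simp [e0, shift, sub_eq_add_neg]

lemma vY_node_cons {ts : List (CTree α)} {j : ℕ} {c : CTree α} (hc : ts[j]? = some c)
    (Y : Finset (List ℕ)) (q : List ℕ) :
    vY (node ts) Y (j :: q) = if [j] ∈ Y then 0 else vY c (sect j Y) q := by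
  obtain ⟨hj, rfl⟩ := List.getElem?_eq_some_iff.mp hc
  have hidx : ∀ i : Fin ts.length, j = i.1 ↔ ⟨j, hj⟩ = i := fun i => by rw [Fin.ext_iff]
  rw [vY]
  simp [e0, shift, hidx]

def children (U : Finset (List ℕ)) (p : List ℕ) : Finset (List ℕ) :=
  U.filter fun q => q ≠ [] ∧ q.dropLast = p

lemma mem_children {U : Finset (List ℕ)} {p q : List ℕ} :
    q ∈ children U p ↔ q ∈ U ∧ ∃ i, q = p ++ [i] := by
  refine Finset.mem_filter.trans (and_congr_right fun _ => ⟨?_, ?_⟩)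
  · rintro ⟨hq, rfl⟩
    exact ⟨q.getLast hq, (List.dropLast_append_getLast hq).symm⟩
  · rintro ⟨i, rfl⟩
    simp

lemma children_uncS_node_nil (ts : List (CTree α)) :
    children (uncS (node ts)) [] =
      (Finset.univ.filter fun i : Fin ts.length => ∃ us, ts[i] = node us).image fun i => [i.1] := by
  ext q
  simp only [mem_children, mem_uncS, Finset.mem_image, Finset.mem_filter, Finset.mem_univ,
    true_and, List.nil_append]
  constructor
  · rintro ⟨⟨us, hus⟩, i, rfl⟩
    obtain ⟨c, hc, -⟩ := exists_getElem?_of_sub_cons (by rw [hus]; rfl)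
    obtain ⟨hi, rfl⟩ := List.getElem?_eq_some_iff.mp hc
    rw [sub_cons hc] at hus
    exact ⟨⟨i, hi⟩, ⟨us, Option.some_injective _ hus⟩, rfl⟩
  · rintro ⟨i, ⟨us, hus⟩, rfl⟩
    refine ⟨⟨us, ?_⟩, i, rfl⟩
    show (node ts).sub [i.1] = _
    rw [sub_cons (List.getElem?_eq_getElem i.2)]
    exact congrArg some hus

lemma children_uncS_node_cons {ts : List (CTree α)} {j : ℕ} {c : CTree α}
    (hc : ts[j]? = some c) (q : List ℕ) :
    children (uncS (node ts)) (j :: q) =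
      (children (uncS c) q).map ⟨List.cons j, List.cons_injective⟩ := by
  ext r
  simp only [mem_children, Finset.mem_map, Function.Embedding.coeFn_mk]
  constructor
  · rintro ⟨hr, i, rfl⟩
    exact ⟨q ++ [i], ⟨(mem_uncS_node_cons hc).mp hr, i, rfl⟩, rfl⟩
  · rintro ⟨a, ⟨ha, i, rfl⟩, rfl⟩
    exact ⟨(mem_uncS_node_cons hc).mpr ha, i, rfl⟩

lemma MinComplete.eq_of_prefix_singleton {t : CTree α} {Y : Finset (List ℕ)}
    (hY : MinComplete t Y) {d : List ℕ} {i : ℕ} (hd : d ∈ Y) (h : d <+: [i]) : d = [i] := by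
  rcases d with _ | ⟨b, l⟩
  · exact absurd rfl (hY.ne_nil hd)
  · obtain ⟨rfl, hl⟩ := List.cons_prefix_cons.mp h
    rw [List.prefix_nil.mp hl]

lemma MinComplete.singleton_mem_of_leaf {ts : List (CTree α)} {Y : Finset (List ℕ)}
    (hY : MinComplete (node ts) Y) {i : ℕ} {a : α} (hi : ts[i]? = some (leaf a)) : [i] ∈ Y := by
  obtain ⟨d, ⟨hd, hdi⟩, -⟩ := hY.2 [i] ((mem_colS_node_cons hi).mpr (mem_colS.mpr ⟨a, rfl⟩))
  rwa [← hY.eq_of_prefix_singleton hd hdi]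

/-- The principal branches not in `Y` are exactly the edges to the uncolored children `q` of the
root with `χ_q(Y) = 1`. -/
lemma vY_node_nil_eq {ts : List (CTree α)} {Y : Finset (List ℕ)} (ht : NoEmptyNode (node ts))
    (hY : MinComplete (node ts) Y) :
    vY (node ts) Y [] = chi Y [] - ∑ q ∈ children (uncS (node ts)) [], chi Y q := by
  have hroot : chi Y [] = 1 := chi_eq_one ht hY (mem_uncS.mpr ⟨ts, rfl⟩)
    fun e he h => hY.ne_nil he (List.prefix_nil.mp h)
  have hchild : ∀ i : Fin ts.length, (∃ us, ts[i] = node us) →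
      chi Y [i.1] = if [i.1] ∉ Y then 1 else 0 := by
    rintro i ⟨us, hus⟩
    split_ifs with hiY
    · exact chi_eq_zero_of_prefix ht hY hiY List.prefix_rfl
    · refine chi_eq_one ht hY ?_ fun e he h => hiY (hY.eq_of_prefix_singleton he h ▸ he)
      exact (mem_uncS_node_cons (List.getElem?_eq_getElem i.2)).mpr
        (mem_uncS.mpr ⟨us, congrArg some hus⟩)
  have hnode : ∀ i : Fin ts.length, [i.1] ∉ Y → ∃ us, ts[i] = node us := by
    intro i hiY
    cases h : ts[i] with
    | leaf a =>
      have hi : ts[i.1]? = some (leaf a) := by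
        rw [List.getElem?_eq_getElem i.2]
        exact congrArg some h
      exact absurd (hY.singleton_mem_of_leaf hi) hiY
    | node us => exact ⟨us, rfl⟩
  rw [vY_node_nil, hroot, children_uncS_node_nil,
    Finset.sum_image fun _ _ _ _ h => Fin.ext (List.singleton_inj.mp h),
    Finset.sum_congr rfl fun i hi => hchild i (Finset.mem_filter.mp hi).2, Finset.sum_boole,
    Finset.filter_filter]
  congr 3
  exact Finset.filter_congr fun i _ => (and_iff_right_of_imp (hnode i)).symm

theorem vY_apply_eq {t : CTree α} (ht : NoEmptyNode t) {Y : Finset (List ℕ)}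
    (hY : MinComplete t Y) {p : List ℕ} (hp : p ∈ uncS t) :
    vY t Y p = chi Y p - ∑ q ∈ children (uncS t) p, chi Y q := by
  induction t using induction_mem generalizing Y p with
  | leaf a => cases p <;> simp [mem_uncS, sub] at hp
  | node ts ih =>
    rcases p with _ | ⟨j, q⟩
    · exact vY_node_nil_eq ht hY
    obtain ⟨us, hus⟩ := mem_uncS.mp hp
    obtain ⟨c, hc, -⟩ := exists_getElem?_of_sub_cons (by rw [hus]; rfl)
    rw [vY_node_cons hc, children_uncS_node_cons hc, Finset.sum_map]
    by_cases hjY : [j] ∈ Y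
    · have hzero : ∀ r, chi Y (j :: r) = 0 := fun r =>
        chi_eq_zero_of_prefix ht hY hjY (List.cons_prefix_cons.mpr ⟨rfl, List.nil_prefix⟩)
      simp [hjY, hzero]
    · rw [if_neg hjY, ih c (List.mem_of_getElem? hc) (ht.sub (sub_cons hc [])) (hY.sect hc hjY)
        ((mem_uncS_node_cons hc).mp hp)]
      simp only [chi_sect hjY]
      rfl

lemma prefix_dropLast_of_ne {a b : List ℕ} (h : a <+: b) (hne : a ≠ b) : a <+: b.dropLast := by
  obtain ⟨c, rfl⟩ := h
  have hc : c ≠ [] := by rintro rfl; exact hne (List.append_nil a).symm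
  rw [List.dropLast_append_of_ne_nil hc]
  exact List.prefix_append a _

/-- Each `q ≠ v` below `v` is counted once positively (as `p = q`) and once negatively (as a
child of its parent), so only `f v` survives. -/
lemma sum_sub_sum_children {M : Type*} [AddCommGroup M] {U : Finset (List ℕ)}
    (hU : ∀ p ∈ U, p ≠ [] → p.dropLast ∈ U) {v : List ℕ} (hv : v ∈ U) (f : List ℕ → M) :
    ∑ p ∈ U.filter (v <+: ·), (f p - ∑ q ∈ children U p, f q) = f v := by
  set D := U.filter (v <+: ·)
  have hvD : v ∈ D := Finset.mem_filter.mpr ⟨hv, List.prefix_rfl⟩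
  have hmaps : ∀ q ∈ D.erase v, q.dropLast ∈ D := by
    intro q hq
    obtain ⟨hqv, hq⟩ := Finset.mem_erase.mp hq
    obtain ⟨hqU, hvq⟩ := Finset.mem_filter.mp hq
    have hq0 : q ≠ [] := by rintro rfl; exact hqv (List.prefix_nil.mp hvq).symm
    exact Finset.mem_filter.mpr ⟨hU q hqU hq0, prefix_dropLast_of_ne hvq (Ne.symm hqv)⟩
  have hfib : ∀ p ∈ D, children U p = (D.erase v).filter (·.dropLast = p) := by
    intro p hp
    have hvp := (Finset.mem_filter.mp hp).2
    ext q
    simp only [children, Finset.mem_filter, Finset.mem_erase, D]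
    constructor
    · rintro ⟨hqU, hq0, rfl⟩
      refine ⟨⟨fun hqv => ?_, hqU, hvp.trans (List.dropLast_prefix q)⟩, rfl⟩
      subst hqv
      have := hvp.length_le
      rw [List.length_dropLast] at this
      have := List.length_pos_iff.mpr hq0
      omega
    · rintro ⟨⟨hqv, hqU, hvq⟩, rfl⟩
      refine ⟨hqU, fun hq0 => hqv ?_, rfl⟩
      subst hq0
      exact (List.prefix_nil.mp hvq).symm
  calc ∑ p ∈ D, (f p - ∑ q ∈ children U p, f q)
      = ∑ p ∈ D, f p - ∑ q ∈ D.erase v, f q := by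
        rw [Finset.sum_sub_distrib, ← Finset.sum_fiberwise_of_maps_to hmaps]
        exact congrArg _ (Finset.sum_congr rfl fun p hp => by rw [hfib p hp])
    _ = f v := by rw [← Finset.add_sum_erase D f hvD, add_sub_cancel_right]

lemma pairZ_sv (t : CTree α) (v : List ℕ) (x : List ℕ → ℤ) :
    pairZ t (sv t v) x = ∑ p ∈ (uncS t).filter (v <+: ·), x p := by
  rw [pairZ, Finset.sum_filter]
  refine Finset.sum_congr rfl fun p hp => ?_
  simp [sv, hp]

lemma pairZ_sv_vY {t : CTree α} (ht : NoEmptyNode t) {Y : Finset (List ℕ)}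
    (hY : MinComplete t Y) {v : List ℕ} (hv : v ∈ uncS t) :
    pairZ t (sv t v) (vY t Y) = chi Y v := by
  rw [pairZ_sv, Finset.sum_congr rfl fun p hp => vY_apply_eq ht hY (Finset.mem_filter.mp hp).1]
  exact sum_sub_sum_children (fun _ hp hne => dropLast_mem_uncS hp hne) hv _

def vYPairing (t : CTree α) : (List ℕ → ℤ) →+ ({Y // Y ∈ MCfin t} → ℤ) where
  toFun u Y := pairZ t u (vY t Y.1)
  map_zero' := by ext; simp [pairZ]
  map_add' u w := by ext; simp [pairZ, add_mul, Finset.sum_add_distrib]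

lemma vYPairing_eq_sum {t : CTree α} (ht : NoEmptyNode t) (u : List ℕ → ℤ) :
    vYPairing t u = ∑ p ∈ uncS t, u p • ((fun Y : {Y // Y ∈ MCfin t} => chi Y.1 p) -
      ∑ q ∈ children (uncS t) p, fun Y : {Y // Y ∈ MCfin t} => chi Y.1 q) := by
  ext Y
  simp only [vYPairing, AddMonoidHom.coe_mk, ZeroHom.coe_mk, Finset.sum_apply, Pi.smul_apply,
    Pi.sub_apply, smul_eq_mul, pairZ]
  exact Finset.sum_congr rfl fun p hp => by rw [vY_apply_eq ht (mem_MCfin.mp Y.2) hp]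

end CTree

/-- The subgroup of `ℤ^{MC(Γ)}` consisting of the functions
`Y ↦ ⟨u, v_Y⟩`, `u ∈ M`, equals the subgroup generated by the `g` functions `χ_v`
(`v` uncolored), where `χ_v(Y) = 1` if `Y` contains an edge of the subtree rooted at
`v`, and `χ_v(Y) = 0` otherwise. -/
theorem pairing_vY_subgroup_eq_closure_chi {α : Type} (t : CTree α)
    (ht : t.IsColoredTree) :
    {f : {Y // Y ∈ CTree.MCfin t} → ℤ |
        ∃ u : List ℕ → ℤ, ∀ Y : {Y // Y ∈ CTree.MCfin t},
          f Y = CTree.pairZ t u (CTree.vY t Y.1)} =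
      ↑(AddSubgroup.closure
        {f : {Y // Y ∈ CTree.MCfin t} → ℤ |
          ∃ v ∈ CTree.uncS t, f = fun Y =>
            if ∃ d ∈ Y.1, v <+: d.dropLast then (1 : ℤ) else 0}) := by
  have hrange : {f : {Y // Y ∈ CTree.MCfin t} → ℤ | ∃ u : List ℕ → ℤ, ∀ Y,
      f Y = CTree.pairZ t u (CTree.vY t Y.1)} = (CTree.vYPairing t).range := by
    ext f
    simp only [Set.mem_ofPred_eq, SetLike.mem_coe, AddMonoidHom.mem_range, funext_iff, eq_comm]
    rfl
  rw [hrange]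
  congr 1
  refine le_antisymm ?_ ((AddSubgroup.closure_le _).mpr ?_)
  · rintro _ ⟨u, rfl⟩
    rw [CTree.vYPairing_eq_sum ht.1]
    exact AddSubgroup.sum_mem _ fun p hp => AddSubgroup.zsmul_mem _ (AddSubgroup.sub_mem _
      (AddSubgroup.subset_closure (by exact ⟨p, hp, rfl⟩)) (AddSubgroup.sum_mem _ fun q hq =>
        AddSubgroup.subset_closure (by exact ⟨q, (Finset.mem_filter.mp hq).1, rfl⟩))) _
  · rintro _ ⟨v, hv, rfl⟩
    exact ⟨CTree.sv t v, funext fun Y => CTree.pairZ_sv_vY ht.1 (CTree.mem_MCfin.mp Y.2) hv⟩
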